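/- For every nonempty OOEBP instance I with item sizes in (0,1], the Next Fit algorithm uses at most 2·OPT(I) bins. -/

import Mathlib

/-!
In any feasible packing every bin has load `< 2`: its last item arrives at load `< 1` and has
size `≤ 1`. Hence the total size is `< 2·OPT`. Next Fit closes a bin only once its load is
`≥ 1`, so the number of closed bins, `nfCost - 1`, is at most the total size.
-/

open scoped BigOperators Classical

namespace OOEBP

noncomputable section

/-- Load of bin `b` under packing `p` of instance `s`. -/
def binLoad (s : List ℝ) (p : ℕ → ℕ) (b : ℕ) : ℝ :=
  ∑ j ∈ Finset.range s.length, if p j = b then s.getD j 0 else 0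

/-- A packing is feasible if each item is placed into a bin whose current
load (total size of earlier items in the same bin) is strictly below 1. -/
def Feasible (s : List ℝ) (p : ℕ → ℕ) : Prop :=
  ∀ i < s.length,
    (∑ j ∈ Finset.range i, if p j = p i then s.getD j 0 else 0) < 1

/-- The cost of a packing: the number of nonempty bins. -/
def cost (s : List ℝ) (p : ℕ → ℕ) : ℕ :=
  ((Finset.range s.length).image p).card

/-- Optimal cost of a feasible packing of `s`. -/
def OPT (s : List ℝ) : ℕ :=
  sInf {m | ∃ p, Feasible s p ∧ cost s p = m}

/-- Item `i` is the exceeding item of its bin: the bin's total size is at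
least 1 and `i` is the item of maximum index in its bin. -/
def IsExceeding (s : List ℝ) (p : ℕ → ℕ) (i : ℕ) : Prop :=
  i < s.length ∧ 1 ≤ binLoad s p (p i) ∧
    ∀ j, i < j → j < s.length → p j ≠ p i

/-- One step of Next Fit: the state is (index of the open bin, its load).
An item is placed into the open bin if its load is strictly below 1, and
otherwise a new bin is opened for it. -/
def nfStep : ℕ × ℝ → ℝ → ℕ × ℝ :=
  fun st x => if st.2 < 1 then (st.1, st.2 + x) else (st.1 + 1, x)

/-- The number of bins used by Next Fit. -/
def nfCost (s : List ℝ) : ℕ :=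
  if s.isEmpty then 0 else (s.foldl nfStep (0, 0)).1 + 1

theorem sum_range_length_getD (s : List ℝ) :
    ∑ j ∈ Finset.range s.length, s.getD j 0 = s.sum := by
  rw [Finset.sum_range, ← Fin.sum_univ_getElem]
  exact Finset.sum_congr rfl fun i _ => List.getD_eq_getElem s 0 i.2

theorem getD_le_one {s : List ℝ} (hs : ∀ x ∈ s, x ≤ 1) (i : ℕ) : s.getD i 0 ≤ 1 := by
  rcases lt_or_ge i s.length with hi | hi
  · rw [List.getD_eq_getElem s 0 hi]
    exact hs _ (List.getElem_mem hi)
  · rw [List.getD_eq_default s 0 hi]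
    exact zero_le_one

theorem sum_binLoad (s : List ℝ) (p : ℕ → ℕ) :
    ∑ b ∈ (Finset.range s.length).image p, binLoad s p b = s.sum := by
  simp only [binLoad, ← Finset.sum_filter]
  rw [Finset.sum_fiberwise_of_maps_to (fun j hj => Finset.mem_image_of_mem p hj),
    sum_range_length_getD]

theorem feasible_id (s : List ℝ) : Feasible s id := fun _ _ =>
  (Finset.sum_eq_zero fun _ hj => if_neg (Finset.mem_range.mp hj).ne).trans_lt zero_lt_one

theorem exists_feasible_cost_eq_OPT (s : List ℝ) : ∃ p, Feasible s p ∧ cost s p = OPT s :=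
  Nat.sInf_mem (s := {m | ∃ p, Feasible s p ∧ cost s p = m}) ⟨_, id, feasible_id s, rfl⟩

theorem binLoad_lt_two {s : List ℝ} (hs : ∀ x ∈ s, x ≤ 1) {p : ℕ → ℕ} (hp : Feasible s p)
    (b : ℕ) : binLoad s p b < 2 := by
  suffices ∀ n ≤ s.length, ∑ j ∈ Finset.range n, (if p j = b then s.getD j 0 else 0) < 2 from
    this _ le_rfl
  intro n
  induction n with
  | zero => simp
  | succ n ih =>
    intro hn
    rw [Finset.sum_range_succ]
    split_ifs with hpn
    · have hprefix := hp n hn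
      rw [hpn] at hprefix
      linarith [getD_le_one hs n]
    · simpa using ih (by omega)

theorem sum_lt_two_mul_cost {s : List ℝ} (hne : s ≠ []) (hs : ∀ x ∈ s, x ≤ 1) {p : ℕ → ℕ}
    (hp : Feasible s p) : s.sum < 2 * cost s p := by
  have hbins : ((Finset.range s.length).image p).Nonempty :=
    (Finset.nonempty_range_iff.mpr (by simpa using hne)).image p
  calc s.sum = ∑ b ∈ (Finset.range s.length).image p, binLoad s p b := (sum_binLoad s p).symm
    _ < ∑ _ ∈ (Finset.range s.length).image p, (2 : ℝ) :=
      Finset.sum_lt_sum_of_nonempty hbins fun b _ => binLoad_lt_two hs hp b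
    _ = 2 * cost s p := by rw [Finset.sum_const, nsmul_eq_mul, cost, mul_comm]

-- The potential of a state is the number of closed bins plus the load of the open bin.
theorem nfStep_potential_le {st : ℕ × ℝ} (hst : 0 ≤ st.2) {x : ℝ} (hx : 0 ≤ x) :
    ((nfStep st x).1 : ℝ) + (nfStep st x).2 ≤ st.1 + st.2 + x ∧ 0 ≤ (nfStep st x).2 := by
  unfold nfStep
  split_ifs
  · exact ⟨(add_assoc _ _ _).ge, add_nonneg hst hx⟩
  · push_cast
    exact ⟨by linarith, hx⟩

theorem foldl_nfStep_potential_le {l : List ℝ} (hl : ∀ x ∈ l, 0 ≤ x) {st : ℕ × ℝ}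
    (hst : 0 ≤ st.2) :
    ((l.foldl nfStep st).1 : ℝ) + (l.foldl nfStep st).2 ≤ st.1 + st.2 + l.sum ∧
      0 ≤ (l.foldl nfStep st).2 := by
  induction l generalizing st with
  | nil => simpa using hst
  | cons x t ih =>
    obtain ⟨hstep, hload⟩ := nfStep_potential_le hst (hl x List.mem_cons_self)
    obtain ⟨hrest, hfinal⟩ := ih (fun y hy => hl y (List.mem_cons_of_mem x hy)) hload
    rw [List.foldl_cons, List.sum_cons]
    exact ⟨by linarith, hfinal⟩

theorem foldl_nfStep_fst_le_sum {s : List ℝ} (hs : ∀ x ∈ s, 0 ≤ x) :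
    ((s.foldl nfStep (0, 0)).1 : ℝ) ≤ s.sum := by
  obtain ⟨hpot, hload⟩ := foldl_nfStep_potential_le hs (st := (0, 0)) le_rfl
  simp only [Nat.cast_zero, zero_add] at hpot
  linarith

theorem stmt3 (s : List ℝ)
    (hs : ∀ x ∈ s, 0 < x ∧ x ≤ 1) :
    nfCost s ≤ 2 * OPT s := by
  obtain ⟨p, hp, hcost⟩ := exists_feasible_cost_eq_OPT s
  rw [nfCost]
  split_ifs with hempty
  · exact Nat.zero_le _
  have hne : s ≠ [] := by simpa using hempty
  have hnf : ((s.foldl nfStep (0, 0)).1 : ℝ) ≤ s.sum :=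
    foldl_nfStep_fst_le_sum fun x hx => (hs x hx).1.le
  have hopt : s.sum < 2 * OPT s := hcost ▸ sum_lt_two_mul_cost hne (fun x hx => (hs x hx).2) hp
  have : (s.foldl nfStep (0, 0)).1 < 2 * OPT s := by exact_mod_cast hnf.trans_lt hopt
  omega

end

end OOEBP
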